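/- (Proposition 1) Assume the ball-constraint assumption and assume (OPF) is feasible (some x ∈ ℝ^{2n} satisfies xᵀA_k x ≤ b_k for all k ∈ K). Then there is no duality gap between (SDP) and (DSDP): the infimum of ⟨C,X⟩ over the (SDP) feasible set equals the supremum of Σ_{k∈K} −b_k α_k over the (DSDP) feasible set. -/

import Mathlib

/-!
The ball constraints write the identity as a nonnegative combination `∑ k, w k • A k` of the
constraint matrices, so every `X ⪰ 0` satisfying perturbed constraints `⟨A k, X⟩ - b k ≤ u k`
has trace at most `∑ k, w k * (b k + u k)`. Hence the set of pairs `(u, s)` attained by such `X`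
with `⟨C, X⟩ ≤ s` is closed, besides being convex and upward closed. For `v'` below the (SDP)
value, a hyperplane separating `(0, v')` from this set has nonnegative coefficients `(λ, μ)`,
with `μ > 0` because (SDP) is feasible, and `α = λ / μ` is (DSDP)-feasible with value above `v'`.
-/

open Matrix

noncomputable section

/-- Trace inner product ⟨A,B⟩ = trace(AB). -/
def ip {m : ℕ} (A B : Matrix (Fin m) (Fin m) ℝ) : ℝ := (A * B).trace

/-- Quadratic form xᵀ A x. -/
def qf {m : ℕ} (A : Matrix (Fin m) (Fin m) ℝ) (x : Fin m → ℝ) : ℝ := x ⬝ᵥ A.mulVec x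

/-- Index of the real part of the voltage at node `i` among the `2n` coordinates. -/
def idx1 (n : ℕ) (i : Fin n) : Fin (2 * n) := ⟨i.val, by have := i.isLt; omega⟩

/-- Index of the imaginary part of the voltage at node `i` among the `2n` coordinates. -/
def idx2 (n : ℕ) (i : Fin n) : Fin (2 * n) := ⟨i.val + n, by have := i.isLt; omega⟩

/-- The matrix of the ball constraint at node `i`: diagonal, with ones exactly in
positions `(i,i)` and `(i+n, i+n)`. -/
def ballMat (n : ℕ) (i : Fin n) : Matrix (Fin (2 * n)) (Fin (2 * n)) ℝ :=
  Matrix.diagonal (fun j => if j = idx1 n i ∨ j = idx2 n i then 1 else 0)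

lemma LinearMap.nonneg_of_ray_subset {E : Type*} [AddCommGroup E] [Module ℝ E] (f : E →ₗ[ℝ] ℝ)
    {s : Set E} {u : ℝ} (hf : ∀ x ∈ s, u < f x) {a d : E} (hray : ∀ t : ℝ, 0 ≤ t → a + t • d ∈ s) :
    0 ≤ f d := by
  by_contra! hd
  have h₀ : u < f a := by simpa using hf _ (hray 0 le_rfl)
  have ht := hf _ (hray ((f a - u) / -f d) (div_nonneg (by linarith) (by linarith)))
  rw [map_add, map_smul, smul_eq_mul, div_mul_eq_mul_div, div_neg, mul_div_cancel_right₀ _ hd.ne]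
    at ht
  linarith

lemma StrongDual.apply_prod_eq_sum {K : Type*} [Fintype K] [DecidableEq K]
    (f : StrongDual ℝ ((K → ℝ) × ℝ)) (p : (K → ℝ) × ℝ) :
    f p = ∑ k, f (Pi.single k 1, 0) * p.1 k + f (0, 1) * p.2 := by
  have hp : p = ∑ k, p.1 k • ((Pi.single k 1 : K → ℝ), (0 : ℝ)) + p.2 • ((0 : K → ℝ), (1 : ℝ)) := by
    ext k <;> simp [Prod.fst_sum, Prod.snd_sum, Finset.sum_apply, Pi.single_apply]
  conv_lhs => rw [hp]
  simp only [map_add, map_sum, map_smul, smul_eq_mul, mul_comm]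

section PosSemidef

variable {ι : Type*} [Fintype ι]

lemma Matrix.PosSemidef.two_mul_abs_apply_le {X : Matrix ι ι ℝ} (hX : X.PosSemidef) (i j : ι) :
    2 * |X i j| ≤ X i i + X j j := by
  classical
  have hsymm : X j i = X i j := (isHermitian_iff_isSymm.mp hX.1).apply i j
  have hquad (s : ℝ) : 0 ≤ X i i + 2 * s * X i j + s ^ 2 * X j j := by
    have := hX.dotProduct_mulVec_nonneg (Pi.single i 1 + Pi.single j s)
    simp only [star_trivial, mulVec_add, mulVec_single, MulOpposite.op_one, one_smul,
      op_smul_eq_smul, dotProduct_add, add_dotProduct, single_dotProduct, col_apply, one_mul,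
      dotProduct_smul, smul_eq_mul] at this
    rw [hsymm] at this
    linear_combination this
  cases abs_cases (X i j) <;> nlinarith [hquad 1, hquad (-1)]

lemma Matrix.PosSemidef.abs_apply_le_trace {X : Matrix ι ι ℝ} (hX : X.PosSemidef) (i j : ι) :
    |X i j| ≤ X.trace := by
  have hdiag (l : ι) : X l l ≤ X.trace :=
    Finset.single_le_sum (f := fun l => X l l) (fun l _ => hX.diag_nonneg) (Finset.mem_univ l)
  linarith [hX.two_mul_abs_apply_le i j, hdiag i, hdiag j]

lemma isClosed_setOf_posSemidef : IsClosed {X : Matrix ι ι ℝ | X.PosSemidef} := by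
  simp only [Matrix.posSemidef_iff_dotProduct_mulVec, Set.ofPred_and, Set.ofPred_forall]
  refine (isClosed_eq (by fun_prop) continuous_id).inter (isClosed_iInter fun x => ?_)
  exact isClosed_le continuous_const (by fun_prop)

lemma isCompact_setOf_posSemidef_trace_le (T : ℝ) :
    IsCompact {X : Matrix ι ι ℝ | X.PosSemidef ∧ X.trace ≤ T} := by
  have hbox : IsCompact (Set.univ.pi fun _ : ι => Set.univ.pi fun _ : ι => Set.Icc (-T) T) :=
    isCompact_univ_pi fun _ => isCompact_univ_pi fun _ => isCompact_Icc
  refine hbox.of_isClosed_subset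
    (isClosed_setOf_posSemidef.inter (isClosed_le continuous_id.matrix_trace continuous_const)) ?_
  rintro X ⟨hX, hXT⟩ i - j -
  exact abs_le.mp ((hX.abs_apply_le_trace i j).trans hXT)

end PosSemidef

section TraceInnerProduct

variable {m : ℕ}

@[simp] lemma ip_add_left (A B X : Matrix (Fin m) (Fin m) ℝ) : ip (A + B) X = ip A X + ip B X := by
  simp [ip, add_mul]

@[simp] lemma ip_smul_left (c : ℝ) (A X : Matrix (Fin m) (Fin m) ℝ) :
    ip (c • A) X = c * ip A X := by
  simp [ip]

@[simp] lemma ip_sum_left {ι : Type*} (s : Finset ι) (A : ι → Matrix (Fin m) (Fin m) ℝ)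
    (X : Matrix (Fin m) (Fin m) ℝ) : ip (∑ k ∈ s, A k) X = ∑ k ∈ s, ip (A k) X := by
  simp [ip, Finset.sum_mul, trace_sum]

@[simp] lemma ip_one_left (X : Matrix (Fin m) (Fin m) ℝ) : ip 1 X = X.trace := by
  simp [ip]

@[simp] lemma ip_add_right (A X Y : Matrix (Fin m) (Fin m) ℝ) : ip A (X + Y) = ip A X + ip A Y := by
  simp [ip, mul_add]

@[simp] lemma ip_smul_right (c : ℝ) (A X : Matrix (Fin m) (Fin m) ℝ) :
    ip A (c • X) = c * ip A X := by
  simp [ip]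

@[simp] lemma ip_zero_right (A : Matrix (Fin m) (Fin m) ℝ) : ip A 0 = 0 := by
  simp [ip]

lemma ip_vecMulVec (A : Matrix (Fin m) (Fin m) ℝ) (x : Fin m → ℝ) :
    ip A (vecMulVec x x) = qf A x := by
  simp only [ip, qf, trace, diag, mul_apply, vecMulVec_apply, dotProduct, mulVec, Finset.mul_sum]
  exact Finset.sum_congr rfl fun i _ => Finset.sum_congr rfl fun j _ => by ring

lemma continuous_ip (A : Matrix (Fin m) (Fin m) ℝ) : Continuous (ip A) :=
  (continuous_const.matrix_mul continuous_id).matrix_trace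

lemma ip_nonneg {M X : Matrix (Fin m) (Fin m) ℝ} (hM : M.PosSemidef) (hX : X.PosSemidef) :
    0 ≤ ip M X := by
  open scoped MatrixOrder in
  obtain ⟨B, rfl⟩ := CStarAlgebra.nonneg_iff_eq_star_mul_self.mp hM.nonneg
  rw [ip, mul_assoc, trace_mul_comm, star_eq_conjTranspose]
  exact (hX.mul_mul_conjTranspose_same B).trace_nonneg

lemma posSemidef_of_isSymm_of_qf_nonneg {M : Matrix (Fin m) (Fin m) ℝ} (hM : M.IsSymm)
    (hqf : ∀ x, 0 ≤ qf M x) : M.PosSemidef :=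
  .of_dotProduct_mulVec_nonneg (isHermitian_iff_isSymm.mpr hM) fun x => by simpa [qf] using hqf x

end TraceInnerProduct

section Duality

variable {m : ℕ} {K : Type*}

def sdpValues (C : Matrix (Fin m) (Fin m) ℝ) (A : K → Matrix (Fin m) (Fin m) ℝ) (b : K → ℝ) :
    Set ℝ :=
  {v | ∃ X : Matrix (Fin m) (Fin m) ℝ,
    X.IsSymm ∧ X.PosSemidef ∧ (∀ k, ip (A k) X ≤ b k) ∧ v = ip C X}

def sdpEpigraph (C : Matrix (Fin m) (Fin m) ℝ) (A : K → Matrix (Fin m) (Fin m) ℝ) (b : K → ℝ) :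
    Set ((K → ℝ) × ℝ) :=
  {p | ∃ X : Matrix (Fin m) (Fin m) ℝ,
    X.PosSemidef ∧ (∀ k, ip (A k) X - b k ≤ p.1 k) ∧ ip C X ≤ p.2}

variable {C : Matrix (Fin m) (Fin m) ℝ} {A : K → Matrix (Fin m) (Fin m) ℝ} {b : K → ℝ}

lemma convex_sdpEpigraph : Convex ℝ (sdpEpigraph C A b) := by
  rintro p ⟨X, hX, hXA, hXC⟩ q ⟨Y, hY, hYA, hYC⟩ s t hs ht hst
  refine ⟨s • X + t • Y, (hX.smul hs).add (hY.smul ht), fun k => ?_, ?_⟩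
  · simp only [ip_add_right, ip_smul_right, Prod.fst_add, Prod.smul_fst, Pi.add_apply,
      Pi.smul_apply, smul_eq_mul]
    have hb : b k = s * b k + t * b k := by rw [← add_mul, hst, one_mul]
    nlinarith [mul_le_mul_of_nonneg_left (hXA k) hs, mul_le_mul_of_nonneg_left (hYA k) ht]
  · simp only [ip_add_right, ip_smul_right, Prod.snd_add, Prod.smul_snd, smul_eq_mul]
    nlinarith [mul_le_mul_of_nonneg_left hXC hs, mul_le_mul_of_nonneg_left hYC ht]

lemma isUpperSet_sdpEpigraph : IsUpperSet (sdpEpigraph C A b) := by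
  rintro p q ⟨hpq₁, hpq₂⟩ ⟨X, hX, hXA, hXC⟩
  exact ⟨X, hX, fun k => (hXA k).trans (hpq₁ k), hXC.trans hpq₂⟩

variable [Fintype K]

def dsdpValues (C : Matrix (Fin m) (Fin m) ℝ) (A : K → Matrix (Fin m) (Fin m) ℝ) (b : K → ℝ) :
    Set ℝ :=
  {v | ∃ α : K → ℝ, (∀ k, 0 ≤ α k) ∧ (C + ∑ k, α k • A k).PosSemidef ∧ v = ∑ k, -(b k) * α k}

lemma le_of_mem_dsdpValues_of_mem_sdpValues {d v : ℝ} (hd : d ∈ dsdpValues C A b)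
    (hv : v ∈ sdpValues C A b) : d ≤ v := by
  obtain ⟨α, hα, hαC, rfl⟩ := hd
  obtain ⟨X, -, hX, hXb, rfl⟩ := hv
  have hpair : 0 ≤ ip C X + ∑ k, α k * ip (A k) X := by
    simpa using ip_nonneg hαC hX
  have hcomp : ∑ k, α k * ip (A k) X ≤ ∑ k, α k * b k :=
    Finset.sum_le_sum fun k _ => mul_le_mul_of_nonneg_left (hXb k) (hα k)
  have hval : ∑ k, -(b k) * α k = -∑ k, α k * b k := by
    rw [← Finset.sum_neg_distrib]
    exact Finset.sum_congr rfl fun k _ => by ring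
  linarith

lemma trace_le_of_sum_smul_eq_one {w : K → ℝ} (hw : ∀ k, 0 ≤ w k) (hwA : ∑ k, w k • A k = 1)
    {X : Matrix (Fin m) (Fin m) ℝ} {c : K → ℝ} (hX : ∀ k, ip (A k) X ≤ c k) :
    X.trace ≤ ∑ k, w k * c k := by
  rw [← ip_one_left, ← hwA, ip_sum_left]
  simp only [ip_smul_left]
  exact Finset.sum_le_sum fun k _ => mul_le_mul_of_nonneg_left (hX k) (hw k)

lemma bddBelow_sdpValues {w : K → ℝ} (hw : ∀ k, 0 ≤ w k) (hwA : ∑ k, w k • A k = 1) :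
    BddBelow (sdpValues C A b) := by
  refine ((isCompact_setOf_posSemidef_trace_le (∑ k, w k * b k)).bddBelow_image
    (continuous_ip C).continuousOn).mono ?_
  rintro _ ⟨X, -, hX, hXb, rfl⟩
  exact ⟨X, ⟨hX, trace_le_of_sum_smul_eq_one hw hwA hXb⟩, rfl⟩

lemma isClosed_sdpEpigraph {w : K → ℝ} (hw : ∀ k, 0 ≤ w k) (hwA : ∑ k, w k • A k = 1) :
    IsClosed (sdpEpigraph C A b) := by
  have : FirstCountableTopology (Matrix (Fin m) (Fin m) ℝ) :=
    inferInstanceAs (FirstCountableTopology (Fin m → Fin m → ℝ))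
  refine IsSeqClosed.isClosed fun p q hp hpq => ?_
  choose X hX hXA hXC using hp
  have hbound : Continuous fun r : (K → ℝ) × ℝ => ∑ k, w k * (b k + r.1 k) := by fun_prop
  obtain ⟨T, hT⟩ := ((hbound.tendsto q).comp hpq).bddAbove_range
  have hXT (j : ℕ) : X j ∈ {Y : Matrix (Fin m) (Fin m) ℝ | Y.PosSemidef ∧ Y.trace ≤ T} :=
    ⟨hX j, (trace_le_of_sum_smul_eq_one hw hwA fun k => by linarith [hXA j k]).trans
      (hT ⟨j, rfl⟩)⟩
  obtain ⟨Y, ⟨hY, -⟩, φ, hφ, hXY⟩ := (isCompact_setOf_posSemidef_trace_le T).tendsto_subseq hXT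
  have hpφ := hpq.comp hφ.tendsto_atTop
  refine ⟨Y, hY, fun k => ?_, ?_⟩
  · exact le_of_tendsto_of_tendsto' ((((continuous_ip _).tendsto Y).comp hXY).sub_const _)
      ((((continuous_apply k).comp continuous_fst).tendsto q).comp hpφ) fun j => hXA _ k
  · exact le_of_tendsto_of_tendsto' (((continuous_ip _).tendsto Y).comp hXY)
      ((continuous_snd.tendsto q).comp hpφ) fun j => hXC _

lemma posSemidef_add_sum_div_smul (hC : C.IsSymm) (hA : ∀ k, (A k).IsSymm) {lam : K → ℝ}
    {μ : ℝ} (hμ : 0 < μ) (hqf : ∀ x, 0 ≤ ∑ k, lam k * qf (A k) x + μ * qf C x) :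
    (C + ∑ k, (lam k / μ) • A k).PosSemidef := by
  refine posSemidef_of_isSymm_of_qf_nonneg ?_ fun x => ?_
  · simp only [IsSymm, transpose_add, transpose_sum, transpose_smul, hC.eq, (hA _).eq]
  · have hμx : qf C x + ∑ k, lam k / μ * qf (A k) x =
        (∑ k, lam k * qf (A k) x + μ * qf C x) / μ := by
      rw [add_div, Finset.sum_div, mul_div_cancel_left₀ _ hμ.ne', add_comm]
      simp only [div_mul_eq_mul_div]
    rw [← ip_vecMulVec, ip_add_left, ip_sum_left]
    simp only [ip_smul_left]
    simp only [ip_vecMulVec, hμx]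
    exact div_nonneg (hqf x) hμ.le

lemma exists_mem_dsdpValues_gt_of_separates (hC : C.IsSymm) (hA : ∀ k, (A k).IsSymm)
    {X₀ : Matrix (Fin m) (Fin m) ℝ} (hX₀ : X₀.PosSemidef) (hX₀b : ∀ k, ip (A k) X₀ ≤ b k)
    {f : StrongDual ℝ ((K → ℝ) × ℝ)} {u v' : ℝ} (hf : ∀ p ∈ sdpEpigraph C A b, u < f p)
    (hfv' : f (0, v') < u) :
    ∃ d ∈ dsdpValues C A b, v' < d := by
  classical
  set lam : K → ℝ := fun k => f (Pi.single k 1, 0)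
  set μ := f (0, 1)
  have hf_apply (p : (K → ℝ) × ℝ) : f p = ∑ k, lam k * p.1 k + μ * p.2 := f.apply_prod_eq_sum p
  have hX₀mem : ((0 : K → ℝ), ip C X₀) ∈ sdpEpigraph C A b :=
    ⟨X₀, hX₀, fun k => sub_nonpos.mpr (hX₀b k), le_rfl⟩
  have hmono {d : (K → ℝ) × ℝ} (hd : 0 ≤ d) : 0 ≤ f d :=
    f.toLinearMap.nonneg_of_ray_subset hf fun t ht =>
      isUpperSet_sdpEpigraph (le_add_of_nonneg_right (smul_nonneg ht hd)) hX₀mem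
  have hlam (k : K) : 0 ≤ lam k := hmono ⟨Pi.single_nonneg.mpr zero_le_one, le_rfl⟩
  -- with `μ = 0`, `f` would vanish on `{0} × ℝ`, which meets the set at `(0, ⟨C, X₀⟩)`
  have hμ : 0 < μ := by
    refine (hmono (d := (0, 1)) ⟨le_rfl, zero_le_one⟩).lt_of_ne' fun hμ₀ => ?_
    have h₁ := hf _ hX₀mem
    rw [hf_apply, show μ = 0 from hμ₀] at h₁ hfv'
    simp only [Pi.zero_apply, mul_zero, Finset.sum_const_zero, zero_add] at h₁ hfv'
    linarith
  refine ⟨∑ k, -(b k) * (lam k / μ), ⟨fun k => lam k / μ, fun k => div_nonneg (hlam k) hμ.le,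
    posSemidef_add_sum_div_smul hC hA hμ fun x => ?_, rfl⟩, ?_⟩
  · have hray := f.toLinearMap.nonneg_of_ray_subset (a := (-b, 0))
      (d := ((fun k => qf (A k) x), qf C x)) hf fun t ht =>
        ⟨t • vecMulVec x x, (posSemidef_vecMulVec_self_star x).smul ht,
          fun k => by simp [ip_vecMulVec], by simp [ip_vecMulVec]⟩
    simpa [hf_apply] using hray
  · have h₀ := hf (-b, 0) ⟨0, .zero, fun k => by simp, by simp⟩
    rw [hf_apply] at h₀ hfv'
    simp only [Pi.zero_apply, mul_zero, Finset.sum_const_zero, zero_add,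
      Pi.neg_apply, add_zero, mul_neg, Finset.sum_neg_distrib] at h₀ hfv'
    have hval : ∑ k, -b k * (lam k / μ) = (-∑ k, lam k * b k) / μ := by
      rw [neg_div, Finset.sum_div, ← Finset.sum_neg_distrib]
      exact Finset.sum_congr rfl fun k _ => by ring
    rw [hval, lt_div_iff₀ hμ]
    linarith

lemma exists_mem_dsdpValues_gt (hC : C.IsSymm) (hA : ∀ k, (A k).IsSymm) {w : K → ℝ}
    (hw : ∀ k, 0 ≤ w k) (hwA : ∑ k, w k • A k = 1) {X₀ : Matrix (Fin m) (Fin m) ℝ}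
    (hX₀ : X₀.PosSemidef) (hX₀b : ∀ k, ip (A k) X₀ ≤ b k) {v v' : ℝ}
    (hv : v ∈ lowerBounds (sdpValues C A b)) (hv' : v' < v) :
    ∃ d ∈ dsdpValues C A b, v' < d := by
  have hv'_not_mem : ((0 : K → ℝ), v') ∉ sdpEpigraph C A b := by
    rintro ⟨X, hX, hXA, hXC⟩
    have hXv : ip C X ∈ sdpValues C A b :=
      ⟨X, isHermitian_iff_isSymm.mp hX.1, hX, fun k => sub_nonpos.mp (hXA k), rfl⟩
    exact (hv'.trans_le (hv hXv)).not_ge hXC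
  obtain ⟨f, u, hfv', hf⟩ :=
    geometric_hahn_banach_point_closed convex_sdpEpigraph (isClosed_sdpEpigraph hw hwA) hv'_not_mem
  exact exists_mem_dsdpValues_gt_of_separates hC hA hX₀ hX₀b hf hfv'

theorem sInf_sdpValues_eq_sSup_dsdpValues (hC : C.IsSymm) (hA : ∀ k, (A k).IsSymm)
    {w : K → ℝ} (hw : ∀ k, 0 ≤ w k) (hwA : ∑ k, w k • A k = 1) {X₀ : Matrix (Fin m) (Fin m) ℝ}
    (hX₀ : X₀.PosSemidef) (hX₀b : ∀ k, ip (A k) X₀ ≤ b k) :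
    sInf (sdpValues C A b) = sSup (dsdpValues C A b) := by
  have hne : (sdpValues C A b).Nonempty :=
    ⟨_, X₀, isHermitian_iff_isSymm.mp hX₀.1, hX₀, hX₀b, rfl⟩
  have hlow : sInf (sdpValues C A b) ∈ lowerBounds (sdpValues C A b) :=
    fun _ hv => csInf_le (bddBelow_sdpValues hw hwA) hv
  have hweak : sInf (sdpValues C A b) ∈ upperBounds (dsdpValues C A b) :=
    fun _ hd => le_csInf hne fun _ hv => le_of_mem_dsdpValues_of_mem_sdpValues hd hv
  obtain ⟨d₀, hd₀, -⟩ := exists_mem_dsdpValues_gt hC hA hw hwA hX₀ hX₀b hlow (sub_one_lt _)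
  refine le_antisymm (le_of_forall_lt fun v hv => ?_) (csSup_le ⟨d₀, hd₀⟩ hweak)
  obtain ⟨d, hd, hvd⟩ := exists_mem_dsdpValues_gt hC hA hw hwA hX₀ hX₀b hlow hv
  exact hvd.trans_le (le_csSup ⟨_, hweak⟩ hd)

end Duality

lemma sum_ballMat (n : ℕ) : ∑ i, ballMat n i = 1 := by
  have hnode (j : Fin (2 * n)) : ∃ i₀ : Fin n, ∀ i, (j = idx1 n i ∨ j = idx2 n i) ↔ i = i₀ := by
    refine ⟨⟨if (j : ℕ) < n then j else j - n, by split_ifs <;> omega⟩, fun i => ?_⟩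
    simp only [idx1, idx2, Fin.ext_iff]
    split_ifs <;> omega
  ext p q
  rw [Matrix.sum_apply]
  simp only [ballMat, diagonal_apply, one_apply]
  split_ifs with hpq
  · obtain ⟨i₀, hi₀⟩ := hnode p
    simp [hi₀]
  · simp

lemma sum_ite_mem_image_smul_eq_one {n : ℕ} {K : Type*} [Fintype K] [DecidableEq K]
    {A : K → Matrix (Fin (2 * n)) (Fin (2 * n)) ℝ} {e : Fin n → K} (he : Function.Injective e)
    (hball : ∀ i, A (e i) = ballMat n i) :
    ∑ k, (if k ∈ Finset.univ.image e then (1 : ℝ) else 0) • A k = 1 := by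
  simp only [ite_smul, one_smul, zero_smul]
  rw [Finset.sum_ite_mem, Finset.univ_inter, Finset.sum_image fun i _ j _ h => he h]
  simp only [hball, sum_ballMat]

theorem stmt_3_general {n : ℕ} {K : Type} [Fintype K]
    (C : Matrix (Fin (2 * n)) (Fin (2 * n)) ℝ) (hC : C.IsSymm)
    (A : K → Matrix (Fin (2 * n)) (Fin (2 * n)) ℝ) (hA : ∀ k, (A k).IsSymm)
    (b : K → ℝ)
    (e : Fin n → K) (he : Function.Injective e)
    (hball : ∀ i : Fin n, A (e i) = ballMat n i)
    (hfeas : ∃ x : Fin (2 * n) → ℝ, ∀ k, qf (A k) x ≤ b k) :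
    sInf {v : ℝ | ∃ X : Matrix (Fin (2 * n)) (Fin (2 * n)) ℝ,
            X.IsSymm ∧ X.PosSemidef ∧ (∀ k, ip (A k) X ≤ b k) ∧ v = ip C X}
      = sSup {v : ℝ | ∃ α : K → ℝ, (∀ k, 0 ≤ α k) ∧
            (C + ∑ k, α k • A k).PosSemidef ∧ v = ∑ k, -(b k) * α k} := by
  classical
  obtain ⟨x, hx⟩ := hfeas
  exact sInf_sdpValues_eq_sSup_dsdpValues hC hA (fun k => by positivity)
    (sum_ite_mem_image_smul_eq_one he hball) (posSemidef_vecMulVec_self_star x)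
    fun k => by simpa [ip_vecMulVec] using hx k

/-- Proposition 1: under the ball-constraint assumption, if (OPF) is feasible
then there is no duality gap between (SDP) and (DSDP). -/
theorem stmt_3 {n : ℕ} (hn : 0 < n) {K : Type} [Fintype K]
    (C : Matrix (Fin (2 * n)) (Fin (2 * n)) ℝ) (hC : C.IsSymm)
    (A : K → Matrix (Fin (2 * n)) (Fin (2 * n)) ℝ) (hA : ∀ k, (A k).IsSymm)
    (b : K → ℝ)
    (e : Fin n → K) (he : Function.Injective e)
    (V : Fin n → ℝ) (hV : ∀ i, 0 < V i)
    (hball : ∀ i : Fin n, A (e i) = ballMat n i)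
    (hb : ∀ i : Fin n, b (e i) = (V i) ^ 2)
    (hfeas : ∃ x : Fin (2 * n) → ℝ, ∀ k, qf (A k) x ≤ b k) :
    sInf {v : ℝ | ∃ X : Matrix (Fin (2 * n)) (Fin (2 * n)) ℝ,
            X.IsSymm ∧ X.PosSemidef ∧ (∀ k, ip (A k) X ≤ b k) ∧ v = ip C X}
      = sSup {v : ℝ | ∃ α : K → ℝ, (∀ k, 0 ≤ α k) ∧
            (C + ∑ k, α k • A k).PosSemidef ∧ v = ∑ k, -(b k) * α k} :=
  stmt_3_general C hC A hA b e he hball hfeas
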